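/- Let (X, w) be a weighted set, let X' = {x ∈ X : w(x) > 0}, and let F(X,w) be the free bounded archimedean ℓ-algebra on (X, w). Then the Yosida space of F(X,w), i.e., the space of bal-morphisms F(X,w) → ℝ topologized as a subspace of ℝ^{F(X,w)} with the product topology, is homeomorphic to the cube [0,1]^{X'}. -/

import Mathlib

/-- An ℓ-algebra: a commutative unital ℝ-algebra with a lattice order such that
addition is translation-invariant, products of nonnegatives are nonnegative, and
scalar multiplication by nonnegative reals preserves nonnegativity. -/
class LAlg (A : Type*) extends CommRing A, Lattice A, Algebra ℝ A where
  add_le_add_right' : ∀ a b : A, a ≤ b → ∀ c : A, a + c ≤ b + c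
  mul_nonneg' : ∀ a b : A, 0 ≤ a → 0 ≤ b → 0 ≤ a * b
  smul_nonneg' : ∀ (r : ℝ) (a : A), 0 ≤ r → 0 ≤ a → 0 ≤ r • a

/-- `A` is bounded: `1` is a strong order unit. -/
def LAlg.IsBounded (A : Type*) [LAlg A] : Prop := ∀ a : A, ∃ n : ℕ, a ≤ n • (1 : A)

/-- `A` is archimedean. -/
def LAlg.IsArch (A : Type*) [LAlg A] : Prop := ∀ a b : A, (∀ n : ℕ, n • a ≤ b) → a ≤ 0

/-- The norm ‖a‖ = inf {r : ℝ | |a| ≤ r·1}, where |a| = a ⊔ -a. -/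
noncomputable def lnorm {A : Type*} [LAlg A] (a : A) : ℝ := sInf {r : ℝ | a ⊔ -a ≤ r • (1 : A)}

/-- A bal-morphism: a unital ℝ-algebra homomorphism preserving binary joins. -/
def IsBalHom {A B : Type*} [LAlg A] [LAlg B] (α : A →ₐ[ℝ] B) : Prop :=
  ∀ a b : A, α (a ⊔ b) = α a ⊔ α b

/-- ℝ is a bounded archimedean ℓ-algebra. -/
noncomputable instance : LAlg ℝ :=
  { (inferInstance : CommRing ℝ), (inferInstance : Lattice ℝ),
    (inferInstance : Algebra ℝ ℝ) with
    add_le_add_right' := fun _ _ h c => by linarith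
    mul_nonneg' := fun _ _ => mul_nonneg
    smul_nonneg' := fun _ _ => smul_nonneg }

/-- The Yosida space of A, realized as the set of bal-morphisms A → ℝ. -/
def YosidaSpace (A : Type*) [LAlg A] : Type _ :=
  {α : A →ₐ[ℝ] ℝ // IsBalHom α}

/-- The Yosida space is topologized as a subspace of ℝ^A with the product topology. -/
noncomputable instance (A : Type*) [LAlg A] : TopologicalSpace (YosidaSpace A) :=
  TopologicalSpace.induced (fun (α : YosidaSpace A) (a : A) => α.1 a) inferInstance

/-!
A point of the Yosida space of `F(X, w)` is a bal-morphism `F(X, w) → ℝ`, and by the universal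
property (applied with `A = ℝ`) these are exactly the extensions of the maps `h : X → ℝ` with
`|h x| ≤ w x`. So, as a set, the Yosida space is the box `∏ₓ [-w x, w x]`, whose factors with
`w x = 0` are points and whose other factors are affinely homeomorphic to `[0, 1]`. Restriction
along `f` is continuous, and the Yosida space of a bounded ℓ-algebra is compact (a closed subset of
`∏ₐ [-‖a‖, ‖a‖]`), so this bijection is a homeomorphism.
-/

open Set Topology

theorem IsBalHom.monotone {A B : Type*} [LAlg A] [LAlg B] {α : A →ₐ[ℝ] B} (hα : IsBalHom α) :
    Monotone α := fun a b hab => by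
  simpa [sup_eq_right.mpr hab] using (hα a b).ge.trans' le_sup_left

theorem lnorm_real (a : ℝ) : lnorm a = |a| := by
  have hset : {r : ℝ | a ⊔ -a ≤ r • (1 : ℝ)} = Ici |a| := by
    ext r
    simp [abs_eq_max_neg]
  rw [lnorm, hset, csInf_Ici]

theorem LAlg.isBounded_real : LAlg.IsBounded ℝ := fun a =>
  (exists_nat_ge a).imp fun n hn => by simpa using hn

theorem LAlg.isArch_real : LAlg.IsArch ℝ := fun a b h => by
  by_contra! ha
  obtain ⟨n, hn⟩ := exists_lt_nsmul ha b
  exact (h n).not_gt hn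

theorem IsBalHom.abs_apply_le_lnorm {A : Type*} [LAlg A] (hA : LAlg.IsBounded A)
    {α : A →ₐ[ℝ] ℝ} (hα : IsBalHom α) (a : A) : |α a| ≤ lnorm a := by
  have hne : {r : ℝ | a ⊔ -a ≤ r • (1 : A)}.Nonempty := by
    obtain ⟨n, hn⟩ := hA (a ⊔ -a)
    exact ⟨n, by rwa [mem_ofPred_eq, Nat.cast_smul_eq_nsmul]⟩
  refine le_csInf hne fun r hr => ?_
  simpa [hα a (-a), abs_eq_max_neg] using hα.monotone hr

namespace YosidaSpace

variable {A : Type*} [LAlg A]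

def toPi (α : YosidaSpace A) : A → ℝ := α.1

theorem isInducing_toPi : IsInducing (toPi : YosidaSpace A → A → ℝ) := ⟨rfl⟩

theorem continuous_eval (a : A) : Continuous fun α : YosidaSpace A => α.1 a :=
  (continuous_apply a).comp isInducing_toPi.continuous

theorem isClosed_range_toPi : IsClosed (range (toPi : YosidaSpace A → A → ℝ)) := by
  let C : Set (A → ℝ) := {g | ∀ a b, g (a + b) = g a + g b} ∩ {g | ∀ a b, g (a * b) = g a * g b} ∩
    {g | ∀ r, g (algebraMap ℝ A r) = r} ∩ {g | ∀ a b, g (a ⊔ b) = g a ⊔ g b}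
  have hC : IsClosed C := by
    refine ((isClosed_setOfPred_map_add A ℝ).inter (isClosed_setOfPred_map_mul A ℝ)).inter ?_
      |>.inter ?_ <;> simp only [ofPred_forall]
    · exact isClosed_iInter fun r => isClosed_eq (continuous_apply _) continuous_const
    · exact isClosed_iInter fun a => isClosed_iInter fun b =>
        isClosed_eq (continuous_apply _) ((continuous_apply a).sup (continuous_apply b))
  suffices range toPi = C from this ▸ hC
  ext g
  constructor
  · rintro ⟨α, rfl⟩
    exact ⟨⟨⟨map_add α.1, map_mul α.1⟩, α.1.commutes⟩, α.2⟩
  · rintro ⟨⟨⟨hadd, hmul⟩, hcomm⟩, hsup⟩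
    let α : A →ₐ[ℝ] ℝ :=
      { toFun := g
        map_one' := by simpa using hcomm 1
        map_mul' := hmul
        map_zero' := by simpa using hadd 0 0
        map_add' := hadd
        commutes' := hcomm }
    exact ⟨⟨α, hsup⟩, rfl⟩

theorem range_toPi_subset (hA : LAlg.IsBounded A) :
    range (toPi : YosidaSpace A → A → ℝ) ⊆ univ.pi fun a => Icc (-lnorm a) (lnorm a) := by
  rintro _ ⟨α, rfl⟩ a -
  exact abs_le.mp (α.2.abs_apply_le_lnorm hA a)

theorem compactSpace (hA : LAlg.IsBounded A) : CompactSpace (YosidaSpace A) := by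
  refine ⟨isInducing_toPi.isCompact_iff.mpr ?_⟩
  rw [image_univ]
  exact (isCompact_univ_pi fun a => isCompact_Icc).of_isClosed_subset isClosed_range_toPi
    (range_toPi_subset hA)

end YosidaSpace

abbrev WeightBox {X : Type*} (w : X → ℝ) : Type _ := {h : X → ℝ // ∀ x, |h x| ≤ w x}

namespace YosidaSpace

variable {X F : Type*} [LAlg F] {w : X → ℝ} {f : X → F}

def restrict (hF : LAlg.IsBounded F) (hf : ∀ x, lnorm (f x) ≤ w x) (α : YosidaSpace F) :
    WeightBox w :=
  ⟨fun x => α.1 (f x), fun x => (α.2.abs_apply_le_lnorm hF _).trans (hf x)⟩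

theorem continuous_restrict (hF : LAlg.IsBounded F) (hf : ∀ x, lnorm (f x) ≤ w x) :
    Continuous (restrict hF hf) :=
  (continuous_pi fun x => continuous_eval (f x)).subtype_mk _

theorem restrict_bijective (hF : LAlg.IsBounded F) (hf : ∀ x, lnorm (f x) ≤ w x)
    (ump : ∀ h : X → ℝ, (∀ x, |h x| ≤ w x) → ∃! α : F →ₐ[ℝ] ℝ, IsBalHom α ∧ α ∘ f = h) :
    Function.Bijective (restrict hF hf) := by
  constructor
  · intro α β hαβ
    obtain ⟨_, -, huniq⟩ := ump _ (restrict hF hf α).2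
    exact Subtype.ext <| (huniq α.1 ⟨α.2, rfl⟩).trans
      (huniq β.1 ⟨β.2, congrArg Subtype.val hαβ.symm⟩).symm
  · intro h
    obtain ⟨α, ⟨hα, hαf⟩, -⟩ := ump h.1 h.2
    exact ⟨⟨α, hα⟩, Subtype.ext hαf⟩

noncomputable def homeomorphWeightBox (hF : LAlg.IsBounded F) (hf : ∀ x, lnorm (f x) ≤ w x)
    (ump : ∀ h : X → ℝ, (∀ x, |h x| ≤ w x) → ∃! α : F →ₐ[ℝ] ℝ, IsBalHom α ∧ α ∘ f = h) :
    YosidaSpace F ≃ₜ WeightBox w :=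
  haveI := compactSpace hF
  (continuous_restrict hF hf).homeoOfEquivCompactToT2
    (f := Equiv.ofBijective _ (restrict_bijective hF hf ump))

end YosidaSpace

noncomputable def WeightBox.homeomorphCube {X : Type*} {w : X → ℝ} (hw : ∀ x, 0 ≤ w x) :
    WeightBox w ≃ₜ ({x : X // 0 < w x} → Icc (0 : ℝ) 1) where
  toFun h x := iccHomeoI _ _ (neg_lt_self x.2) ⟨h.1 x, abs_le.mp (h.2 x)⟩
  invFun t := ⟨fun x =>
      if hx : 0 < w x then (iccHomeoI _ _ (neg_lt_self hx)).symm (t ⟨x, hx⟩) else 0, fun x => by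
      by_cases hx : 0 < w x
      · simpa [hx] using abs_le.mpr ((iccHomeoI _ _ (neg_lt_self hx)).symm (t ⟨x, hx⟩)).2
      · simpa [hx] using hw x⟩
  left_inv h := by
    ext x
    by_cases hx : 0 < w x
    · simp [hx]
    · have := (h.2 x).trans (not_lt.mp hx)
      simp [hx, abs_nonpos_iff.mp this]
  right_inv t := by
    funext x
    simp only [x.2, dif_pos, Subtype.coe_eta, Homeomorph.apply_symm_apply]
  continuous_toFun := continuous_pi fun x => (iccHomeoI _ _ (neg_lt_self x.2)).continuous.comp <|
    ((continuous_apply x.1).comp continuous_subtype_val).subtype_mk _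
  continuous_invFun := by
    refine (continuous_pi fun x => ?_).subtype_mk _
    by_cases hx : 0 < w x
    · simp only [hx, dif_pos]
      exact continuous_subtype_val.comp <|
        (iccHomeoI _ _ (neg_lt_self hx)).symm.continuous.comp (continuous_apply _)
    · simp only [hx, dif_neg, not_false_eq_true]
      exact continuous_const

theorem stmt8_general (X : Type) (w : X → ℝ) (hw : ∀ x, 0 ≤ w x)
    (F : Type) [LAlg F] (hFb : LAlg.IsBounded F)
    (f : X → F) (hf : ∀ x, lnorm (f x) ≤ w x)
    (ump : ∀ (A : Type) [LAlg A], LAlg.IsBounded A → LAlg.IsArch A →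
      ∀ h : X → A, (∀ x, lnorm (h x) ≤ w x) →
        ∃! α : F →ₐ[ℝ] A, IsBalHom α ∧ α ∘ f = h) :
    Nonempty (YosidaSpace F ≃ₜ ({x : X // 0 < w x} → (Set.Icc (0 : ℝ) 1 : Set ℝ))) := by
  have ump_real : ∀ h : X → ℝ, (∀ x, |h x| ≤ w x) →
      ∃! α : F →ₐ[ℝ] ℝ, IsBalHom α ∧ α ∘ f = h := fun h hh =>
    ump ℝ LAlg.isBounded_real LAlg.isArch_real h fun x => (lnorm_real _).trans_le (hh x)
  exact ⟨(YosidaSpace.homeomorphWeightBox hFb hf ump_real).trans (WeightBox.homeomorphCube hw)⟩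

/-- the Yosida space of the free bounded archimedean ℓ-algebra on a
weighted set (X, w) is homeomorphic to the cube [0,1]^{X'"'"'}, where X'"'"' = {x | w x > 0}. -/
theorem stmt8 (X : Type) (w : X → ℝ) (hw : ∀ x, 0 ≤ w x)
    (F : Type) [LAlg F] (hFb : LAlg.IsBounded F) (hFa : LAlg.IsArch F)
    (f : X → F) (hf : ∀ x, lnorm (f x) ≤ w x)
    (ump : ∀ (A : Type) [LAlg A], LAlg.IsBounded A → LAlg.IsArch A →
      ∀ h : X → A, (∀ x, lnorm (h x) ≤ w x) →
        ∃! α : F →ₐ[ℝ] A, IsBalHom α ∧ α ∘ f = h) :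
    Nonempty (YosidaSpace F ≃ₜ ({x : X // 0 < w x} → (Set.Icc (0 : ℝ) 1 : Set ℝ))) :=
  stmt8_general X w hw F hFb f hf ump
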